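/- Let G be a connected graph with chromatic number χ(G) ≥ 2 and let G' = G + K_1 be the join of G with a single new vertex w. Then χ(G') = χ(G) + 1, the vertex w yields a rainbow neighbourhood in every chromatic colouring of G', and for every chromatic colouring c of G (extended to G' by giving w the new colour), a set F ⊆ V(G) is a fade set of G with respect to c if and only if F is a fade set of G' with respect to the extended colouring. Consequently f(G') = f(G). -/

import Mathlib

def closedNbr {V : Type*} [Fintype V] [DecidableEq V] (G : SimpleGraph V)
    [DecidableRel G.Adj] (u : V) : Finset V :=
  insert u (G.neighborFinset u)

def YieldsRainbow {V : Type*} [Fintype V] [DecidableEq V] (G : SimpleGraph V)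
    [DecidableRel G.Adj] {k : ℕ} (c : V → Fin k) (u : V) : Prop :=
  ∀ i : Fin k, ∃ v ∈ closedNbr G u, c v = i

def IsFadeSet {V : Type*} [Fintype V] [DecidableEq V] (G : SimpleGraph V)
    [DecidableRel G.Adj] {k : ℕ} (c : V → Fin k) (F : Finset V) : Prop :=
  ∀ u : V, YieldsRainbow G c u →
    ∀ i : Fin k, ∃ v ∈ closedNbr G u, c v = i ∧ v ∉ F

noncomputable def fadingNumber {V : Type*} [Fintype V] [DecidableEq V]
    (G : SimpleGraph V) [DecidableRel G.Adj] {k : ℕ} (c : V → Fin k) : ℕ :=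
  sSup {m | ∃ F : Finset V, IsFadeSet G c F ∧ F.card = m}

/-- The join `G + K₁`, where `none` is the new apex vertex. -/
def joinK1 {V : Type*} (G : SimpleGraph V) : SimpleGraph (Option V) where
  Adj u v :=
    match u, v with
    | some a, some b => G.Adj a b
    | some _, none => True
    | none, some _ => True
    | none, none => False
  symm := by
    constructor
    intro u v h
    match u, v with
    | some a, some b => exact G.adj_symm h
    | some _, none => trivial
    | none, some _ => trivial
  loopless := by
    constructor
    intro u h
    match u with
    | some a => exact G.irrefl h
    | none => exact h

instance joinK1.decAdj {V : Type*} (G : SimpleGraph V) [DecidableRel G.Adj] :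
    DecidableRel (joinK1 G).Adj
  | some a, some b => inferInstanceAs (Decidable (G.Adj a b))
  | some _, none => inferInstanceAs (Decidable True)
  | none, some _ => inferInstanceAs (Decidable True)
  | none, none => inferInstanceAs (Decidable False)

/-- Extend a colouring of `G` to `G + K₁`, giving the apex the new colour. -/
def extColour {V : Type*} {k : ℕ} (c : V → Fin k) : Option V → Fin (k + 1) :=
  fun u => u.elim (Fin.last k) (fun v => (c v).castSucc)

/-!
A proper colouring of `G + K₁` gives the apex a colour that appears nowhere in `G`, so
`χ(G + K₁) = χ(G) + 1`; hence every chromatic colouring of the join is surjective, and the apex,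
which sees every vertex, yields a rainbow neighbourhood. In a chromatic colouring of `G` every
colour class contains a rainbow vertex (otherwise the class could be recoloured away). So the
apex keeps each old colour whenever the rainbow vertices of `G` do, while its own colour lives
only on the apex and can never be faded: fade sets of `G` and of the join correspond via `some`.
-/

open Finset Function SimpleGraph

section Colouring

variable {V : Type*} [Fintype V] [DecidableEq V] {G : SimpleGraph V} [DecidableRel G.Adj]

lemma mem_closedNbr {u v : V} : v ∈ closedNbr G u ↔ v = u ∨ G.Adj u v := by
  simp [closedNbr]

lemma self_mem_closedNbr (u : V) : u ∈ closedNbr G u :=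
  mem_closedNbr.mpr (Or.inl rfl)

/-- Recolouring every vertex of colour `j` by a colour missing from its closed neighbourhood
keeps the colouring proper, because the vertices of colour `j` are pairwise non-adjacent. -/
lemma SimpleGraph.Coloring.exists_forall_ne_of_not_yieldsRainbow {k : ℕ}
    (C : G.Coloring (Fin k)) {j : Fin k} (h : ∀ u, C u = j → ¬ YieldsRainbow G C u) :
    ∃ C' : G.Coloring (Fin k), ∀ u, C' u ≠ j := by
  have hmiss : ∀ u, C u = j → ∃ i, ∀ v ∈ closedNbr G u, C v ≠ i := fun u hu => by
    simpa [YieldsRainbow] using h u hu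
  have : Nonempty (Fin k) := ⟨j⟩
  choose! miss hmiss using hmiss
  classical
  let c' : V → Fin k := fun u => if C u = j then miss u else C u
  have hc'_ne : ∀ u, c' u ≠ j := by
    intro u
    by_cases hu : C u = j
    · simpa [c', hu] using (hmiss u hu u (self_mem_closedNbr u)).symm
    · simp [c', hu]
  refine ⟨Coloring.mk c' fun {u v} huv => ?_, hc'_ne⟩
  have hv_mem : v ∈ closedNbr G u := mem_closedNbr.mpr (Or.inr huv)
  have hu_mem : u ∈ closedNbr G v := mem_closedNbr.mpr (Or.inr huv.symm)
  by_cases hu : C u = j <;> by_cases hv : C v = j <;> simp only [c', hu, hv, if_true, if_false]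
  · exact absurd (hu.trans hv.symm) (C.valid huv)
  · exact (hmiss u hu v hv_mem).symm
  · exact hmiss v hv u hu_mem
  · exact C.valid huv

lemma SimpleGraph.Coloring.exists_yieldsRainbow {k : ℕ} (C : G.Coloring (Fin k))
    (hchrom : G.chromaticNumber = k) (j : Fin k) : ∃ u, C u = j ∧ YieldsRainbow G C u := by
  by_contra! h
  obtain ⟨C', hC'⟩ := C.exists_forall_ne_of_not_yieldsRainbow h
  obtain ⟨u, hu⟩ := le_chromaticNumber_iff_forall_surjective.mp hchrom.ge C' j
  exact hC' u hu

end Colouring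

section Join

variable {V : Type*} {G : SimpleGraph V} {n : ℕ}

lemma joinK1_adj_some_some {a b : V} : (joinK1 G).Adj (some a) (some b) ↔ G.Adj a b := Iff.rfl

lemma joinK1_adj_some_none (a : V) : (joinK1 G).Adj (some a) none := trivial

lemma joinK1_adj_none_some (a : V) : (joinK1 G).Adj none (some a) := trivial

lemma SimpleGraph.Colorable.joinK1 (h : G.Colorable n) : (_root_.joinK1 G).Colorable (n + 1) := by
  obtain ⟨C⟩ := h
  refine ⟨Coloring.mk (extColour C) fun {u v} huv => ?_⟩
  match u, v, huv with
  | some a, some b, huv => exact fun he => C.valid huv (Fin.castSucc_injective _ he)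
  | some _, none, _ => exact (Fin.castSucc_lt_last _).ne
  | none, some _, _ => exact (Fin.castSucc_lt_last _).ne'

lemma SimpleGraph.Colorable.of_joinK1 (h : (_root_.joinK1 G).Colorable (n + 1)) :
    G.Colorable n := by
  obtain ⟨C⟩ := h
  let D : G.Coloring {i // i ≠ C none} :=
    Coloring.mk (fun v => ⟨C (some v), C.valid (joinK1_adj_some_none v)⟩)
      fun huv he => C.valid (joinK1_adj_some_some.mpr huv) (congrArg Subtype.val he)
  exact ⟨G.recolorOfEquiv (finSuccAboveEquiv (C none)).symm D⟩

lemma chromaticNumber_joinK1 : (joinK1 G).chromaticNumber = G.chromaticNumber + 1 := by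
  refine le_antisymm ?_ ?_
  · cases hG : G.chromaticNumber with
    | top => exact le_top
    | coe n =>
      exact_mod_cast (chromaticNumber_le_iff_colorable.mp hG.le).joinK1.chromaticNumber_le
  · cases hJ : (joinK1 G).chromaticNumber with
    | top => exact le_top
    | coe n =>
      have hn := chromaticNumber_le_iff_colorable.mp hJ.le
      obtain _ | m := n
      · exact (hn.some none).elim0
      · push_cast
        gcongr
        exact hn.of_joinK1.chromaticNumber_le

end Join

section Fade

variable {V : Type*} [Fintype V] [DecidableEq V] {G : SimpleGraph V} [DecidableRel G.Adj]
  {k : ℕ} {c : V → Fin k}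

lemma closedNbr_joinK1_none : closedNbr (joinK1 G) none = univ := by
  ext (_ | a) <;> simp [mem_closedNbr, joinK1_adj_none_some]

lemma none_mem_closedNbr_joinK1 (u : Option V) : none ∈ closedNbr (joinK1 G) u := by
  cases u with
  | none => exact self_mem_closedNbr none
  | some a => exact mem_closedNbr.mpr (Or.inr (joinK1_adj_some_none a))

lemma some_mem_closedNbr_joinK1_some {u v : V} :
    some v ∈ closedNbr (joinK1 G) (some u) ↔ v ∈ closedNbr G u := by
  simp [mem_closedNbr, joinK1_adj_some_some]

lemma yieldsRainbow_joinK1_none_iff {n : ℕ} {d : Option V → Fin n} :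
    YieldsRainbow (joinK1 G) d none ↔ Surjective d := by
  simp [YieldsRainbow, closedNbr_joinK1_none, Surjective]

omit [Fintype V] [DecidableEq V] in
lemma extColour_eq_castSucc_iff {v : Option V} {i : Fin k} :
    extColour c v = i.castSucc ↔ ∃ w, v = some w ∧ c w = i := by
  cases v with
  | none => simpa [extColour] using (Fin.castSucc_lt_last i).ne'
  | some w => simp [extColour]

omit [Fintype V] [DecidableEq V] in
lemma extColour_eq_last_iff {v : Option V} : extColour c v = Fin.last k ↔ v = none := by
  cases v <;> simp [extColour]

omit [Fintype V] [DecidableEq V] in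
lemma extColour_surjective (hc : Surjective c) : Surjective (extColour c) := by
  intro i
  rcases Fin.eq_castSucc_or_eq_last i with ⟨j, rfl⟩ | rfl
  · obtain ⟨v, rfl⟩ := hc j
    exact ⟨some v, rfl⟩
  · exact ⟨none, rfl⟩

lemma yieldsRainbow_joinK1_some_iff {u : V} :
    YieldsRainbow (joinK1 G) (extColour c) (some u) ↔ YieldsRainbow G c u := by
  refine ⟨fun h i => ?_, fun h i => ?_⟩
  · obtain ⟨v, hv, hcv⟩ := h i.castSucc
    obtain ⟨w, rfl, hw⟩ := extColour_eq_castSucc_iff.mp hcv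
    exact ⟨w, some_mem_closedNbr_joinK1_some.mp hv, hw⟩
  · rcases Fin.eq_castSucc_or_eq_last i with ⟨j, rfl⟩ | rfl
    · obtain ⟨w, hw, rfl⟩ := h j
      exact ⟨some w, some_mem_closedNbr_joinK1_some.mpr hw, rfl⟩
    · exact ⟨none, none_mem_closedNbr_joinK1 _, rfl⟩

lemma IsFadeSet.of_map_some {F : Finset V}
    (hF : IsFadeSet (joinK1 G) (extColour c) (F.map Embedding.some)) : IsFadeSet G c F := by
  intro u hu i
  obtain ⟨v, hv, hcv, hvF⟩ := hF (some u) (yieldsRainbow_joinK1_some_iff.mpr hu) i.castSucc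
  obtain ⟨w, rfl, hw⟩ := extColour_eq_castSucc_iff.mp hcv
  exact ⟨w, some_mem_closedNbr_joinK1_some.mp hv, hw, fun h => hvF (mem_map_of_mem _ h)⟩

lemma IsFadeSet.map_some (hc : ∀ j, ∃ u, c u = j ∧ YieldsRainbow G c u) {F : Finset V}
    (hF : IsFadeSet G c F) : IsFadeSet (joinK1 G) (extColour c) (F.map Embedding.some) := by
  intro u hu i
  rcases Fin.eq_castSucc_or_eq_last i with ⟨j, rfl⟩ | rfl
  · cases u with
    | none =>
      -- the apex sees every vertex, so it keeps colour `j` as long as the rainbow vertex `w` does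
      obtain ⟨w, -, hw⟩ := hc j
      obtain ⟨v, -, hcv, hvF⟩ := hF w hw j
      exact ⟨some v, by simp [closedNbr_joinK1_none], by simp [extColour, hcv], by simpa⟩
    | some a =>
      obtain ⟨v, hv, hcv, hvF⟩ := hF a (yieldsRainbow_joinK1_some_iff.mp hu) j
      exact ⟨some v, some_mem_closedNbr_joinK1_some.mpr hv, by simp [extColour, hcv], by simpa⟩
  · exact ⟨none, none_mem_closedNbr_joinK1 u, rfl, by simp⟩

lemma IsFadeSet.none_notMem_of_surjective (hc : Surjective c) {F : Finset (Option V)}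
    (hF : IsFadeSet (joinK1 G) (extColour c) F) : none ∉ F := by
  obtain ⟨v, -, hv, hvF⟩ :=
    hF none (yieldsRainbow_joinK1_none_iff.mpr (extColour_surjective hc)) (Fin.last k)
  rwa [extColour_eq_last_iff.mp hv] at hvF

lemma fadingNumber_joinK1 (hc : ∀ j, ∃ u, c u = j ∧ YieldsRainbow G c u) :
    fadingNumber (joinK1 G) (extColour c) = fadingNumber G c := by
  have hsurj : Surjective c := fun j => (hc j).imp fun _ => And.left
  unfold fadingNumber
  congr 1
  ext m
  constructor
  · rintro ⟨F', hF', rfl⟩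
    have hF'_eq : F'.eraseNone.map Embedding.some = F' := by
      rw [map_some_eraseNone, erase_eq_of_notMem (hF'.none_notMem_of_surjective hsurj)]
    refine ⟨F'.eraseNone, IsFadeSet.of_map_some (by rwa [hF'_eq]), ?_⟩
    rw [← card_map, hF'_eq]
  · rintro ⟨F, hF, rfl⟩
    exact ⟨F.map Embedding.some, hF.map_some hc, card_map _⟩

end Fade

theorem stmt_8_general {V : Type*} [Fintype V] [DecidableEq V] (G : SimpleGraph V)
    [DecidableRel G.Adj] {k : ℕ}
    (c : V → Fin k) (hproper : ∀ u v : V, G.Adj u v → c u ≠ c v)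
    (hchrom : G.chromaticNumber = k) :
    (joinK1 G).chromaticNumber = (k + 1 : ℕ) ∧
    (∀ d : Option V → Fin (k + 1),
      (∀ u v : Option V, (joinK1 G).Adj u v → d u ≠ d v) →
        YieldsRainbow (joinK1 G) d none) ∧
    (∀ F : Finset V,
      IsFadeSet G c F ↔
        IsFadeSet (joinK1 G) (extColour c) (F.map Function.Embedding.some)) ∧
    fadingNumber (joinK1 G) (extColour c) = fadingNumber G c := by
  have hrainbow : ∀ j, ∃ u, c u = j ∧ YieldsRainbow G c u :=
    (Coloring.mk c fun h => hproper _ _ h).exists_yieldsRainbow hchrom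
  have hchrom' : (joinK1 G).chromaticNumber = (k + 1 : ℕ) := by
    rw [chromaticNumber_joinK1, hchrom]
    norm_cast
  refine ⟨hchrom', fun d hd => ?_, fun F => ⟨IsFadeSet.map_some hrainbow, IsFadeSet.of_map_some⟩,
    fadingNumber_joinK1 hrainbow⟩
  exact yieldsRainbow_joinK1_none_iff.mpr
    (le_chromaticNumber_iff_forall_surjective.mp hchrom'.ge (Coloring.mk d fun h => hd _ _ h))

theorem stmt_8 {V : Type*} [Fintype V] [DecidableEq V] (G : SimpleGraph V)
    [DecidableRel G.Adj] (hconn : G.Connected) {k : ℕ} (hk : 2 ≤ k)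
    (c : V → Fin k) (hproper : ∀ u v : V, G.Adj u v → c u ≠ c v)
    (hchrom : G.chromaticNumber = k) :
    (joinK1 G).chromaticNumber = (k + 1 : ℕ) ∧
    (∀ d : Option V → Fin (k + 1),
      (∀ u v : Option V, (joinK1 G).Adj u v → d u ≠ d v) →
        YieldsRainbow (joinK1 G) d none) ∧
    (∀ F : Finset V,
      IsFadeSet G c F ↔
        IsFadeSet (joinK1 G) (extColour c) (F.map Function.Embedding.some)) ∧
    fadingNumber (joinK1 G) (extColour c) = fadingNumber G c :=
  stmt_8_general G c hproper hchrom
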